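/- Let Δ be a pure simplicial tree and k ≥ 1. If every pair of minimal monomial generators u, v of I(Δ)^{[k]} is connected by a path in G^{(u,v)}_{I(Δ)^{[k]}} (i.e., I(Δ)^{[k]} is linearly related), then every pair of minimal monomial generators u, v of I(Δ)^{[k+1]} is connected by a path in G^{(u,v)}_{I(Δ)^{[k+1]}} (i.e., I(Δ)^{[k+1]} is linearly related). -/

import Mathlib

noncomputable section

open Finset MvPolynomial

/-- A simplicial complex on the vertex type `V`: a finite, nonempty collection of
finite subsets of `V` that is closed under taking subsets. -/
structure SimplicialComplex (V : Type) [DecidableEq V] : Type where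
  faces : Finset (Finset V)
  nonempty' : faces.Nonempty
  down_closed : ∀ ⦃F G : Finset V⦄, F ∈ faces → G ⊆ F → G ∈ faces

namespace SimplicialComplex

variable {V : Type} [DecidableEq V]

open scoped Classical in
/-- The facets: the maximal faces with respect to inclusion. -/
def facets (Δ : SimplicialComplex V) : Finset (Finset V) :=
  Δ.faces.filter fun F => ∀ G ∈ Δ.faces, F ⊆ G → F = G

/-- A matching: a set of pairwise disjoint facets. -/
def IsMatching (Δ : SimplicialComplex V) (M : Finset (Finset V)) : Prop :=
  M ⊆ Δ.facets ∧ ∀ F ∈ M, ∀ G ∈ M, F ≠ G → F ∩ G = ∅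

/-- The matching number `ν(Δ)`: the maximum cardinality of a matching. -/
def matchingNumber (Δ : SimplicialComplex V) : ℕ :=
  sSup {r : ℕ | ∃ M : Finset (Finset V), Δ.IsMatching M ∧ M.card = r}

/-- `F` is a leaf of the subcomplex generated by the facet set `S`: either `F` is
the only facet, or there is another facet `G` with `H ∩ F ⊆ G ∩ F` for all
facets `H ≠ F`. -/
def IsLeafIn (S : Finset (Finset V)) (F : Finset V) : Prop :=
  F ∈ S ∧ (S = {F} ∨ ∃ G ∈ S, G ≠ F ∧ ∀ H ∈ S, H ≠ F → H ∩ F ⊆ G ∩ F)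

/-- A simplicial forest: every nonempty subcomplex has a leaf (equivalently,
every connected component is a simplicial tree). -/
def IsForest (Δ : SimplicialComplex V) : Prop :=
  ∀ S ⊆ Δ.facets, S.Nonempty → ∃ F, IsLeafIn S F

/-- Connectedness: any two facets are joined by a chain of facets in which
consecutive facets intersect nontrivially. -/
def Connected (Δ : SimplicialComplex V) : Prop :=
  ∀ F ∈ Δ.facets, ∀ G ∈ Δ.facets,
    Relation.ReflTransGen
      (fun A B => A ∈ Δ.facets ∧ B ∈ Δ.facets ∧ (A ∩ B).Nonempty) F G

/-- A simplicial tree: a connected simplicial forest. -/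
def IsTree (Δ : SimplicialComplex V) : Prop := Δ.Connected ∧ Δ.IsForest

/-- A good leaf: a facet which is a leaf of every subcomplex containing it. -/
def IsGoodLeaf (Δ : SimplicialComplex V) (F : Finset V) : Prop :=
  F ∈ Δ.facets ∧ ∀ S ⊆ Δ.facets, F ∈ S → IsLeafIn S F

/-- Two disjoint facets `F`, `G` form a gap: the induced subcomplex on `F ∪ G`
has facet set exactly `{F, G}`. -/
def FormGap (Δ : SimplicialComplex V) (F G : Finset V) : Prop :=
  F ∈ Δ.facets ∧ G ∈ Δ.facets ∧ F ∩ G = ∅ ∧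
    ∀ H ∈ Δ.facets, H ⊆ F ∪ G → H = F ∨ H = G

/-- A restricted matching: a matching one of whose facets forms a gap with every
other facet of the matching. -/
def IsRestrictedMatching (Δ : SimplicialComplex V) (M : Finset (Finset V)) : Prop :=
  Δ.IsMatching M ∧ ∃ F ∈ M, ∀ G ∈ M, G ≠ F → Δ.FormGap F G

/-- The restricted matching number `ν₀(Δ)`. -/
def restrictedMatchingNumber (Δ : SimplicialComplex V) : ℕ :=
  sSup {r : ℕ | ∃ M : Finset (Finset V), Δ.IsRestrictedMatching M ∧ M.card = r}

/-- An induced matching: a matching `M` such that the facets contained in the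
union of the members of `M` are exactly the members of `M`. -/
def IsInducedMatching (Δ : SimplicialComplex V) (M : Finset (Finset V)) : Prop :=
  Δ.IsMatching M ∧ ∀ H ∈ Δ.facets, H ⊆ M.biUnion id → H ∈ M

/-- The induced matching number `ν₁(Δ)`. -/
def inducedMatchingNumber (Δ : SimplicialComplex V) : ℕ :=
  sSup {r : ℕ | ∃ M : Finset (Finset V), Δ.IsInducedMatching M ∧ M.card = r}

/-- A proper chain of length `n` between the facets `F` and `G`. -/
def ProperChain (Δ : SimplicialComplex V) (F G : Finset V) (n : ℕ) : Prop :=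
  ∃ c : ℕ → Finset V, c 0 = F ∧ c n = G ∧ (∀ i ≤ n, c i ∈ Δ.facets) ∧
    ∀ i < n, (c i ∩ c (i + 1)).card = (c (i + 1)).card - 1

/-- The distance between two facets: the minimal length of a proper chain. -/
def dist (Δ : SimplicialComplex V) (F G : Finset V) : ℕ :=
  sInf {n : ℕ | Δ.ProperChain F G n}

/-- The intersection property for a pure complex whose facets have cardinality
`t` (`= d + 1`): it is connected in codimension 1, and any two facets `F`, `G`
with `|F ∩ G| = t - k` (`1 ≤ k ≤ t`) satisfy `dist(F, G) = k`. -/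
def HasIntersectionProperty (Δ : SimplicialComplex V) (t : ℕ) : Prop :=
  (∀ F ∈ Δ.facets, F.card = t) ∧
    (∀ F ∈ Δ.facets, ∀ G ∈ Δ.facets, ∃ n, Δ.ProperChain F G n) ∧
    ∀ F ∈ Δ.facets, ∀ G ∈ Δ.facets, ∀ k, 1 ≤ k → k ≤ t →
      (F ∩ G).card = t - k → Δ.dist F G = k

end SimplicialComplex

/-- The simplicial complex generated by a finite family of faces. -/
def ofFacets {V : Type} [DecidableEq V] (ℱ : Finset (Finset V)) :
    SimplicialComplex V where
  faces := insert ∅ (ℱ.biUnion Finset.powerset)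
  nonempty' := ⟨∅, Finset.mem_insert_self _ _⟩
  down_closed := by
    intro F G hF hGF
    rcases Finset.mem_insert.mp hF with h | h
    · subst h
      exact Finset.mem_insert.mpr <| Or.inl (Finset.subset_empty.mp hGF)
    · rcases Finset.mem_biUnion.mp h with ⟨A, hA, hFA⟩
      exact Finset.mem_insert.mpr <| Or.inr <| Finset.mem_biUnion.mpr
        ⟨A, hA, Finset.mem_powerset.mpr (hGF.trans (Finset.mem_powerset.mp hFA))⟩

/-- The ideal of `K[x_v : v ∈ V]` generated by the products
`x_{F₁} ⋯ x_{F_k}` over all `k`-matchings `{F₁, …, F_k}` taken from the facet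
set `ℱ`.  For `ℱ = ℱ(Δ)` this is the `k`-th squarefree power `I(Δ)^{[k]}` of the
facet ideal `I(Δ)` (and the facet ideal itself for `k = 1`). -/
def matchPow (K : Type) [Field K] {V : Type} [DecidableEq V]
    (ℱ : Finset (Finset V)) (k : ℕ) : Ideal (MvPolynomial V K) :=
  Ideal.span {p | ∃ M : Finset (Finset V), M ⊆ ℱ ∧
    (∀ F ∈ M, ∀ G ∈ M, F ≠ G → F ∩ G = ∅) ∧ M.card = k ∧
    p = ∏ F ∈ M, ∏ v ∈ F, (X v : MvPolynomial V K)}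

/-- The `k`-th squarefree power `I(Δ)^{[k]}` of the facet ideal of `Δ`. -/
def sqfreePower (K : Type) [Field K] {V : Type} [DecidableEq V]
    (Δ : SimplicialComplex V) (k : ℕ) : Ideal (MvPolynomial V K) :=
  matchPow K Δ.facets k

/-- `p` is a monomial with coefficient `1`. -/
def IsMonomialOne {K : Type} [Field K] {V : Type} (p : MvPolynomial V K) : Prop :=
  ∃ d : V →₀ ℕ, p = monomial d 1

/-- `u` is a minimal monomial generator of the monomial ideal `I`: `u` is a
monomial of `I` which is not strictly divisible by any monomial of `I`. -/
def IsMinGen {K : Type} [Field K] {V : Type} (I : Ideal (MvPolynomial V K))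
    (u : MvPolynomial V K) : Prop :=
  IsMonomialOne u ∧ u ∈ I ∧
    ∀ v : MvPolynomial V K, IsMonomialOne v → v ∈ I → v ∣ u → v = u

/-- A monomial ideal `I` has linear quotients: its minimal monomial generators
can be listed as `f₁, …, f_m` so that each colon ideal
`(f₁, …, f_{i-1}) : (f_i)` is generated by a subset of the variables. -/
def HasLinearQuotients {K : Type} [Field K] {V : Type}
    (I : Ideal (MvPolynomial V K)) : Prop :=
  ∃ L : List (MvPolynomial V K), L.Nodup ∧ (∀ u, u ∈ L ↔ IsMinGen I u) ∧
    ∀ i : ℕ, ∀ hi : i < L.length, 1 ≤ i →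
      ∃ s : Set V,
        Submodule.colon (Ideal.span {q | q ∈ L.take i}) (Ideal.span {L.get ⟨i, hi⟩}) =
          Ideal.span ((fun v => (X v : MvPolynomial V K)) '' s)

/-- The degree of the monomial with exponent vector `d`. -/
def degOf {V : Type} (d : V →₀ ℕ) : ℕ := d.sum fun _ n => n

/-- The edge relation of the induced graph `G_I^{(u,v)}` of Bigdeli–Herzog–Zheng,
for a monomial ideal `I` generated in degree `d`, where `m` is the exponent
vector of `lcm(u, v)`: two minimal monomial generators (identified with their
exponent vectors) dividing `lcm(u, v)` are adjacent when their lcm has degree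
`d + 1`. -/
def EdgeRel (K : Type) [Field K] {V : Type} [DecidableEq V]
    (I : Ideal (MvPolynomial V K)) (d : ℕ) (m : V →₀ ℕ) (u v : V →₀ ℕ) : Prop :=
  IsMinGen I (monomial u (1 : K)) ∧ IsMinGen I (monomial v (1 : K)) ∧
    u ≤ m ∧ v ≤ m ∧ degOf (u ⊔ v) = d + 1

/-- The combinatorial criterion of Bigdeli–Herzog–Zheng for a monomial ideal `I`
generated in degree `d` to be linearly related: any two minimal monomial
generators `u`, `v` are connected by a path in `G_I^{(u,v)}`. -/
def LinearlyRelatedVia (K : Type) [Field K] {V : Type} [DecidableEq V]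
    (I : Ideal (MvPolynomial V K)) (d : ℕ) : Prop :=
  ∀ a b : V →₀ ℕ, IsMinGen I (monomial a (1 : K)) → IsMinGen I (monomial b (1 : K)) →
    Relation.ReflTransGen (EdgeRel K I d (a ⊔ b)) a b

/-- The `t`-path simplicial tree `Γ_{n,t}` of the path graph `P_n` on the
vertices `1, …, n`: its facets are the intervals `F_i = {i, …, i + t - 1}` for
`1 ≤ i ≤ n - t + 1`. -/
def pathFacets (n t : ℕ) : Finset (Finset ℕ) :=
  (Finset.Icc 1 (n - t + 1)).image fun i => Finset.Icc i (i + t - 1)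

/-- The `t`-path simplicial tree `Γ_{n,t}` of the path graph `P_n`. -/
def pathComplex (n t : ℕ) : SimplicialComplex ℕ := ofFacets (pathFacets n t)

/-!
Minimal generators of `I(Δ)^{[k]}` are the monomials `x_M` of the `k`-matchings `M`; purity puts
them all in degree `k t`. If two `(k+1)`-matchings `M`, `N` share a facet `G`, a path from
`M \ {G}` to `N \ {G}` in the graph of `I(Δ)^{[k]}`, multiplied by `x_G`, is a path from `M` to
`N`. Otherwise a leaf `F` of the subforest `M ∪ N`, say `F ∈ M`, meets at most one facet `J` of
`N`, so `(N \ {J}) ∪ {F}` is a matching sharing `F` with `M` and, as `k ≥ 1`, a facet with `N`;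
two applications of the first case connect `M` to `N`.
-/

namespace SimplicialComplex.IsMatching

variable {V : Type} [DecidableEq V] {Δ : SimplicialComplex V} {M : Finset (Finset V)}

lemma disjoint (hM : Δ.IsMatching M) {F G : Finset V} (hF : F ∈ M) (hG : G ∈ M) (hne : F ≠ G) :
    Disjoint F G :=
  Finset.disjoint_iff_inter_eq_empty.mpr (hM.2 F hF G hG hne)

lemma subset (hM : Δ.IsMatching M) {A : Finset (Finset V)} (h : A ⊆ M) : Δ.IsMatching A :=
  ⟨h.trans hM.1, fun F hF G hG => hM.2 F (h hF) G (h hG)⟩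

lemma insert (hM : Δ.IsMatching M) {F : Finset V} (hF : F ∈ Δ.facets)
    (hdisj : ∀ G ∈ M, Disjoint F G) : Δ.IsMatching (insert F M) := by
  refine ⟨Finset.insert_subset hF hM.1, fun A hA B hB hne => ?_⟩
  rw [← Finset.disjoint_iff_inter_eq_empty]
  rcases Finset.mem_insert.mp hA with rfl | hAM <;> rcases Finset.mem_insert.mp hB with rfl | hBM
  · exact absurd rfl hne
  · exact hdisj B hBM
  · exact (hdisj A hAM).symm
  · exact hM.disjoint hAM hBM hne

end SimplicialComplex.IsMatching

section EdgeRel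

variable {K : Type} [Field K] {V : Type} [DecidableEq V] {I : Ideal (MvPolynomial V K)} {d : ℕ}

lemma EdgeRel.mono {m m' u v : V →₀ ℕ} (he : EdgeRel K I d m u v) (hm : m ≤ m') :
    EdgeRel K I d m' u v :=
  ⟨he.1, he.2.1, he.2.2.1.trans hm, he.2.2.2.1.trans hm, he.2.2.2.2⟩

lemma reflTransGen_edgeRel_mono {m m' u v : V →₀ ℕ} (hm : m ≤ m')
    (h : Relation.ReflTransGen (EdgeRel K I d m) u v) :
    Relation.ReflTransGen (EdgeRel K I d m') u v :=
  Relation.ReflTransGen.mono (fun _ _ he => he.mono hm) _ _ h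

instance EdgeRel.instSymm {m : V →₀ ℕ} : Std.Symm (EdgeRel K I d m) where
  symm _ _ he := ⟨he.2.1, he.1, he.2.2.2.1, he.2.2.1, by rw [sup_comm]; exact he.2.2.2.2⟩

end EdgeRel

namespace SqfreePower

variable {V : Type}

/-- The exponent vector of `x_F`. -/
def facetExp (F : Finset V) : V →₀ ℕ := ∑ v ∈ F, Finsupp.single v 1

/-- The exponent vector of `x_{F₁} ⋯ x_{F_r}` for `M = {F₁, …, F_r}`. -/
def matchingExp (M : Finset (Finset V)) : V →₀ ℕ := ∑ F ∈ M, facetExp F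

lemma degOf_eq_degree (d : V →₀ ℕ) : degOf d = d.degree := rfl

lemma facetExp_apply_of_mem {F : Finset V} {x : V} (hx : x ∈ F) : facetExp F x = 1 := by
  classical
  simp [facetExp, Finsupp.finsetSum_apply, Finsupp.single_apply, hx]

lemma facetExp_apply_of_notMem {F : Finset V} {x : V} (hx : x ∉ F) : facetExp F x = 0 := by
  classical
  simp [facetExp, Finsupp.finsetSum_apply, Finsupp.single_apply, hx]

lemma degree_facetExp (F : Finset V) : (facetExp F).degree = F.card := by
  simp [facetExp, map_sum]

lemma facetExp_le_matchingExp {F : Finset V} {M : Finset (Finset V)} (h : F ∈ M) :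
    facetExp F ≤ matchingExp M :=
  Finset.single_le_sum (fun _ _ => zero_le) h

lemma matchingExp_mono {A M : Finset (Finset V)} (h : A ⊆ M) : matchingExp A ≤ matchingExp M :=
  Finset.sum_le_sum_of_subset h

lemma matchingExp_apply_eq_zero {F : Finset V} {M : Finset (Finset V)}
    (h : ∀ G ∈ M, Disjoint F G) {x : V} (hx : x ∈ F) : matchingExp M x = 0 := by
  rw [matchingExp, Finsupp.finsetSum_apply]
  exact Finset.sum_eq_zero fun G hG =>
    facetExp_apply_of_notMem (Finset.disjoint_left.mp (h G hG) hx)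

lemma facetExp_add_le {F : Finset V} {u m : V →₀ ℕ} (hF : facetExp F ≤ m) (hu : u ≤ m)
    (hz : ∀ x ∈ F, u x = 0) : facetExp F + u ≤ m := by
  intro x
  by_cases hx : x ∈ F
  · simpa [hz x hx] using hF x
  · simpa [facetExp_apply_of_notMem hx] using hu x

lemma eq_of_le_of_degree_le {u w : V →₀ ℕ} (h : u ≤ w) (hd : w.degree ≤ u.degree) : u = w := by
  obtain ⟨d, rfl⟩ := exists_add_of_le h
  rw [map_add] at hd
  rw [(Finsupp.degree_eq_zero_iff d).mp (by omega), add_zero]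

lemma sup_add_distrib (u v w : V →₀ ℕ) : (u ⊔ v) + w = (u + w) ⊔ (v + w) := by
  ext x
  exact (max_add_add_right (u x) (v x) (w x)).symm

lemma prod_prod_X_eq_monomial (K : Type) [Field K] (M : Finset (Finset V)) :
    ∏ F ∈ M, ∏ v ∈ F, (X v : MvPolynomial V K) = monomial (matchingExp M) 1 := by
  simp only [matchingExp, facetExp, monomial_sum_one, X]

variable [DecidableEq V] {K : Type} [Field K] {Δ : SimplicialComplex V} {t : ℕ}

lemma matchingExp_erase_add {F : Finset V} {M : Finset (Finset V)} (h : F ∈ M) :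
    matchingExp (M.erase F) + facetExp F = matchingExp M :=
  Finset.sum_erase_add M facetExp h

lemma matchingExp_insert {F : Finset V} {M : Finset (Finset V)} (h : F ∉ M) :
    matchingExp (insert F M) = facetExp F + matchingExp M :=
  Finset.sum_insert h

lemma degree_matchingExp (hpure : ∀ F ∈ Δ.facets, F.card = t) {M : Finset (Finset V)}
    (hM : M ⊆ Δ.facets) :
    (matchingExp M).degree = M.card * t := by
  rw [matchingExp, map_sum, Finset.sum_congr rfl fun F hF => by
    rw [degree_facetExp, hpure F (hM hF)], Finset.sum_const, smul_eq_mul]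

lemma matchingExp_erase_apply_eq_zero {M : Finset (Finset V)} (hM : Δ.IsMatching M)
    {F : Finset V} (hF : F ∈ M) {x : V} (hx : x ∈ F) : matchingExp (M.erase F) x = 0 :=
  matchingExp_apply_eq_zero
    (fun _ hG => hM.disjoint hF (Finset.mem_of_mem_erase hG) (Finset.ne_of_mem_erase hG).symm) hx

lemma monomial_mem_sqfreePower_iff {k : ℕ} {e : V →₀ ℕ} :
    monomial e (1 : K) ∈ sqfreePower K Δ k ↔
      ∃ M, Δ.IsMatching M ∧ M.card = k ∧ matchingExp M ≤ e := by
  classical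
  have hspan : sqfreePower K Δ k = Ideal.span ((fun d => monomial d (1 : K)) ''
      {d | ∃ M, Δ.IsMatching M ∧ M.card = k ∧ matchingExp M = d}) := by
    refine congrArg Ideal.span (Set.ext fun p => ⟨?_, ?_⟩)
    · rintro ⟨M, hMf, hMd, hMc, rfl⟩
      exact ⟨_, ⟨M, ⟨hMf, hMd⟩, hMc, rfl⟩, (prod_prod_X_eq_monomial K M).symm⟩
    · rintro ⟨_, ⟨M, hM, hMc, rfl⟩, rfl⟩
      exact ⟨M, hM.1, hM.2, hMc, (prod_prod_X_eq_monomial K M).symm⟩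
  rw [hspan, mem_ideal_span_monomial_image, support_monomial, if_neg one_ne_zero]
  simp [and_assoc]

lemma isMinGen_sqfreePower_iff (hpure : ∀ F ∈ Δ.facets, F.card = t) {k : ℕ} {a : V →₀ ℕ} :
    IsMinGen (sqfreePower K Δ k) (monomial a (1 : K)) ↔
      ∃ M, Δ.IsMatching M ∧ M.card = k ∧ matchingExp M = a := by
  constructor
  · rintro ⟨-, ha, hmin⟩
    obtain ⟨M, hM, hMc, hle⟩ := monomial_mem_sqfreePower_iff.mp ha
    have hmem : monomial (matchingExp M) (1 : K) ∈ sqfreePower K Δ k :=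
      monomial_mem_sqfreePower_iff.mpr ⟨M, hM, hMc, le_rfl⟩
    have heq := hmin _ ⟨_, rfl⟩ hmem (monomial_dvd_monomial.mpr ⟨Or.inr hle, dvd_rfl⟩)
    exact ⟨M, hM, hMc, monomial_left_injective one_ne_zero heq⟩
  · rintro ⟨M, hM, hMc, rfl⟩
    refine ⟨⟨_, rfl⟩, monomial_mem_sqfreePower_iff.mpr ⟨M, hM, hMc, le_rfl⟩, ?_⟩
    rintro _ ⟨e, rfl⟩ he hdvd
    obtain ⟨P, hP, hPc, hPe⟩ := monomial_mem_sqfreePower_iff.mp he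
    have heM : e ≤ matchingExp M := by
      simpa using (monomial_dvd_monomial.mp hdvd).1
    -- all generators have degree `k * t`, so the divisor `x^e` of `x_M` is `x_M` itself
    have hdeg : (matchingExp M).degree ≤ e.degree := by
      rw [degree_matchingExp hpure hM.1, hMc, ← hPc, ← degree_matchingExp hpure hP.1]
      exact Finsupp.degree_mono hPe
    rw [eq_of_le_of_degree_le heM hdeg]

lemma isMinGen_add_facetExp (hpure : ∀ F ∈ Δ.facets, F.card = t) {k : ℕ} {F : Finset V}
    (hF : F ∈ Δ.facets) (hFne : F.Nonempty) {u : V →₀ ℕ}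
    (hu : IsMinGen (sqfreePower K Δ k) (monomial u (1 : K))) (hz : ∀ x ∈ F, u x = 0) :
    IsMinGen (sqfreePower K Δ (k + 1)) (monomial (u + facetExp F) (1 : K)) := by
  obtain ⟨P, hP, hPc, rfl⟩ := (isMinGen_sqfreePower_iff hpure).mp hu
  have hdisj : ∀ G ∈ P, Disjoint F G := fun G hG =>
    Finset.disjoint_left.mpr fun x hxF hxG => by
      simpa [facetExp_apply_of_mem hxG, hz x hxF] using facetExp_le_matchingExp hG x
  have hFP : F ∉ P := fun hFP =>
    hFne.ne_empty (Finset.disjoint_self_iff_empty F |>.mp (hdisj F hFP))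
  refine (isMinGen_sqfreePower_iff hpure).mpr ⟨insert F P, hP.insert hF hdisj, ?_, ?_⟩
  · rw [Finset.card_insert_of_notMem hFP, hPc]
  · rw [matchingExp_insert hFP, add_comm]

lemma edgeRel_add_facetExp (hpure : ∀ F ∈ Δ.facets, F.card = t) {k : ℕ} {F : Finset V}
    (hF : F ∈ Δ.facets) (hFne : F.Nonempty) {m u v : V →₀ ℕ} (hm : ∀ x ∈ F, m x = 0)
    (he : EdgeRel K (sqfreePower K Δ k) (k * t) m u v) :
    EdgeRel K (sqfreePower K Δ (k + 1)) ((k + 1) * t) (m + facetExp F)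
      (u + facetExp F) (v + facetExp F) := by
  obtain ⟨hu, hv, hum, hvm, hdeg⟩ := he
  have hz : ∀ w ≤ m, ∀ x ∈ F, w x = 0 := fun w hw x hx =>
    Nat.eq_zero_of_le_zero ((hw x).trans (hm x hx).le)
  refine ⟨isMinGen_add_facetExp hpure hF hFne hu (hz u hum),
    isMinGen_add_facetExp hpure hF hFne hv (hz v hvm),
    add_le_add hum le_rfl, add_le_add hvm le_rfl, ?_⟩
  rw [← sup_add_distrib, degOf_eq_degree, map_add, ← degOf_eq_degree, hdeg, degree_facetExp,
    hpure F hF]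
  ring

lemma reflTransGen_of_mem_of_mem (hpure : ∀ F ∈ Δ.facets, F.card = t) (ht : 0 < t) {k : ℕ}
    (h : LinearlyRelatedVia K (sqfreePower K Δ k) (k * t)) {M N : Finset (Finset V)}
    (hM : Δ.IsMatching M) (hMc : M.card = k + 1) (hN : Δ.IsMatching N) (hNc : N.card = k + 1)
    {G : Finset V} (hGM : G ∈ M) (hGN : G ∈ N) :
    Relation.ReflTransGen
      (EdgeRel K (sqfreePower K Δ (k + 1)) ((k + 1) * t) (matchingExp M ⊔ matchingExp N))
      (matchingExp M) (matchingExp N) := by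
  have hGne : G.Nonempty := Finset.card_pos.mp (hpure G (hM.1 hGM) ▸ ht)
  have hgen : ∀ P, Δ.IsMatching P → P.card = k + 1 → G ∈ P →
      IsMinGen (sqfreePower K Δ k) (monomial (matchingExp (P.erase G)) (1 : K)) :=
    fun P hP hPc hGP => (isMinGen_sqfreePower_iff hpure).mpr
      ⟨_, hP.subset (Finset.erase_subset G P), by rw [Finset.card_erase_of_mem hGP, hPc]; rfl, rfl⟩
  have hzero : ∀ x ∈ G, (matchingExp (M.erase G) ⊔ matchingExp (N.erase G)) x = 0 := by
    intro x hx
    simp [matchingExp_erase_apply_eq_zero hM hGM hx, matchingExp_erase_apply_eq_zero hN hGN hx]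
  have hpath : Relation.ReflTransGen (EdgeRel K (sqfreePower K Δ (k + 1)) ((k + 1) * t)
      ((matchingExp (M.erase G) ⊔ matchingExp (N.erase G)) + facetExp G))
      (matchingExp (M.erase G) + facetExp G) (matchingExp (N.erase G) + facetExp G) :=
    Relation.ReflTransGen.lift (· + facetExp G)
      (fun _ _ => edgeRel_add_facetExp hpure (hM.1 hGM) hGne hzero) _ _
      (h _ _ (hgen M hM hMc hGM) (hgen N hN hNc hGN))
  rwa [sup_add_distrib, matchingExp_erase_add hGM, matchingExp_erase_add hGN] at hpath

lemma reflTransGen_of_forall_disjoint_erase (hpure : ∀ F ∈ Δ.facets, F.card = t) (ht : 0 < t)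
    {k : ℕ} (hk : 1 ≤ k) (h : LinearlyRelatedVia K (sqfreePower K Δ k) (k * t))
    {M N : Finset (Finset V)} (hM : Δ.IsMatching M) (hMc : M.card = k + 1)
    (hN : Δ.IsMatching N) (hNc : N.card = k + 1) {F J : Finset V} (hFM : F ∈ M) (hFN : F ∉ N)
    (hJN : J ∈ N) (hdisj : ∀ G ∈ N.erase J, Disjoint F G) :
    Relation.ReflTransGen
      (EdgeRel K (sqfreePower K Δ (k + 1)) ((k + 1) * t) (matchingExp M ⊔ matchingExp N))
      (matchingExp M) (matchingExp N) := by
  have hFN' : F ∉ N.erase J := fun hF => hFN (Finset.mem_of_mem_erase hF)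
  set M' := insert F (N.erase J)
  have hM' : Δ.IsMatching M' := (hN.subset (Finset.erase_subset J N)).insert (hM.1 hFM) hdisj
  have hM'c : M'.card = k + 1 := by
    rw [Finset.card_insert_of_notMem hFN', Finset.card_erase_of_mem hJN, hNc, Nat.add_sub_cancel]
  have hM'le : matchingExp M' ≤ matchingExp M ⊔ matchingExp N := by
    rw [matchingExp_insert hFN']
    exact facetExp_add_le ((facetExp_le_matchingExp hFM).trans le_sup_left)
      ((matchingExp_mono (Finset.erase_subset J N)).trans le_sup_right)
      fun x hx => matchingExp_apply_eq_zero hdisj hx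
  obtain ⟨G, hG⟩ : (N.erase J).Nonempty := by
    rw [← Finset.card_pos, Finset.card_erase_of_mem hJN]
    omega
  have h₁ := reflTransGen_of_mem_of_mem hpure ht h hM hMc hM' hM'c hFM (Finset.mem_insert_self F _)
  have h₂ := reflTransGen_of_mem_of_mem hpure ht h hM' hM'c hN hNc
    (Finset.mem_insert_of_mem hG) (Finset.mem_of_mem_erase hG)
  exact (reflTransGen_edgeRel_mono (sup_le le_sup_left hM'le) h₁).trans
    (reflTransGen_edgeRel_mono (sup_le hM'le le_sup_right) h₂)

lemma pos_of_pure_of_one_lt_card (hpure : ∀ F ∈ Δ.facets, F.card = t) {M : Finset (Finset V)}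
    (hM : M ⊆ Δ.facets) (h : 1 < M.card) : 0 < t := by
  obtain ⟨F, hF, G, hG, hne⟩ := Finset.one_lt_card.mp h
  refine Nat.pos_of_ne_zero fun ht => hne ?_
  have hF0 : F.card = 0 := ht ▸ hpure F (hM hF)
  have hG0 : G.card = 0 := ht ▸ hpure G (hM hG)
  rw [Finset.card_eq_zero.mp hF0, Finset.card_eq_zero.mp hG0]

lemma exists_forall_disjoint_erase_of_isLeafIn {M N : Finset (Finset V)} (hM : Δ.IsMatching M)
    (hN : Δ.IsMatching N) (hNne : N.Nonempty) {F : Finset V} (hFM : F ∈ M) (hFN : F ∉ N)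
    (hleaf : SimplicialComplex.IsLeafIn (M ∪ N) F) : ∃ J ∈ N, ∀ G ∈ N.erase J, Disjoint F G := by
  obtain ⟨-, hsingle | ⟨J, hJ, hJF, hsub⟩⟩ := hleaf
  · obtain ⟨G, hG⟩ := hNne
    have hGF : G = F := Finset.mem_singleton.mp (hsingle ▸ Finset.mem_union_right M hG)
    exact absurd (hGF ▸ hG) hFN
  have hdisj : ∀ G ∈ N, G ≠ J → Disjoint F G := by
    intro G hG hGJ
    have hGF : G ∩ F ⊆ J ∩ F := hsub G (Finset.mem_union_right M hG) (ne_of_mem_of_not_mem hG hFN)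
    refine Finset.disjoint_left.mpr fun x hxF hxG => ?_
    have hxJ : x ∈ J := (Finset.mem_inter.mp (hGF (Finset.mem_inter.mpr ⟨hxG, hxF⟩))).1
    rcases Finset.mem_union.mp hJ with hJM | hJN
    · exact Finset.disjoint_left.mp (hM.disjoint hJM hFM hJF) hxJ hxF
    · exact Finset.disjoint_left.mp (hN.disjoint hG hJN hGJ) hxG hxJ
  by_cases hJN : J ∈ N
  · exact ⟨J, hJN, fun G hG => hdisj G (Finset.mem_of_mem_erase hG) (Finset.ne_of_mem_erase hG)⟩
  · obtain ⟨J', hJ'⟩ := hNne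
    exact ⟨J', hJ', fun G hG => hdisj G (Finset.mem_of_mem_erase hG)
      (ne_of_mem_of_not_mem (Finset.mem_of_mem_erase hG) hJN)⟩

lemma reflTransGen_of_isLeafIn (hpure : ∀ F ∈ Δ.facets, F.card = t) (ht : 0 < t)
    {k : ℕ} (hk : 1 ≤ k) (h : LinearlyRelatedVia K (sqfreePower K Δ k) (k * t))
    {M N : Finset (Finset V)} (hM : Δ.IsMatching M) (hMc : M.card = k + 1)
    (hN : Δ.IsMatching N) (hNc : N.card = k + 1) (hMN : ∀ G ∈ M, G ∉ N) {F : Finset V}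
    (hFM : F ∈ M) (hleaf : SimplicialComplex.IsLeafIn (M ∪ N) F) :
    Relation.ReflTransGen
      (EdgeRel K (sqfreePower K Δ (k + 1)) ((k + 1) * t) (matchingExp M ⊔ matchingExp N))
      (matchingExp M) (matchingExp N) := by
  obtain ⟨J, hJN, hdisj⟩ := exists_forall_disjoint_erase_of_isLeafIn hM hN
    (Finset.card_pos.mp (by omega)) hFM (hMN F hFM) hleaf
  exact reflTransGen_of_forall_disjoint_erase hpure ht hk h hM hMc hN hNc hFM (hMN F hFM) hJN hdisj

end SqfreePower

open SqfreePower

/-- For a pure simplicial tree, if `I(Δ)^{[k]}` is linearly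
related (in the combinatorial Bigdeli–Herzog–Zheng sense), then so is
`I(Δ)^{[k+1]}`. -/
theorem linearlyRelated_succ
    (K : Type) [Field K] {V : Type} [DecidableEq V]
    (Δ : SimplicialComplex V) (hΔ : Δ.IsTree)
    (t : ℕ) (hpure : ∀ F ∈ Δ.facets, F.card = t)
    (k : ℕ) (hk : 1 ≤ k)
    (h : LinearlyRelatedVia K (sqfreePower K Δ k) (k * t)) :
    LinearlyRelatedVia K (sqfreePower K Δ (k + 1)) ((k + 1) * t) := by
  intro a b ha hb
  obtain ⟨M, hM, hMc, rfl⟩ := (isMinGen_sqfreePower_iff hpure).mp ha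
  obtain ⟨N, hN, hNc, rfl⟩ := (isMinGen_sqfreePower_iff hpure).mp hb
  have ht : 0 < t := pos_of_pure_of_one_lt_card hpure hM.1 (by omega)
  by_cases hMN : ∃ G ∈ M, G ∈ N
  · obtain ⟨G, hGM, hGN⟩ := hMN
    exact reflTransGen_of_mem_of_mem hpure ht h hM hMc hN hNc hGM hGN
  push Not at hMN
  obtain ⟨F, hleaf⟩ := hΔ.2 (M ∪ N) (Finset.union_subset hM.1 hN.1)
    ((Finset.card_pos.mp (by omega)).mono Finset.subset_union_left)
  rcases Finset.mem_union.mp hleaf.1 with hFM | hFN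
  · exact reflTransGen_of_isLeafIn hpure ht hk h hM hMc hN hNc hMN hFM hleaf
  · rw [sup_comm]
    refine Std.Symm.symm _ _ (reflTransGen_of_isLeafIn hpure ht hk h hN hNc hM hMc
      (fun G hGN hGM => hMN G hGM hGN) hFN (by rwa [Finset.union_comm] at hleaf))
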